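/- Let G be a locally compact compactly generated group with Property (CF), let π be a continuous isometric representation of G on a Banach space E, and let b ∈ Z¹(G,π) be a sublinear 1-cocycle, i.e. ‖b(g)‖ = o(|g|_S). Then b lies in the closure of the space of coboundaries B¹(G,π) in the topology of uniform convergence on compact sets; equivalently, the affine action σ(g)v = π(g)v + b(g) admits a sequence of almost fixed points. -/

import Mathlib

open MeasureTheory Filter Set Pointwise symmDiff

noncomputable def wordLength {G : Type*} [Group G] (S : Set G) (g : G) : ℕ :=
  sInf {n : ℕ | g ∈ S ^ n}

/-! The almost fixed points are the averages `v n = ⨍ x in F n, b x ∂μ` of the cocycle over the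
Følner sets. The cocycle identity turns `π s (v n) + b s` into the average of `b` over `s • F n`,
so the displacement of `v n` under the affine action is a difference of averages over two sets of
equal measure. It is bounded by `sup ‖b‖` over `S ^ (n + 1)` times `μ (s • F n ∆ F n) / μ (F n)`,
which sublinearity bounds by `(C / n) * (M_ε + ε (n + 1))` for every `ε > 0`. -/

theorem IsCompact.pow {M : Type*} [Monoid M] [TopologicalSpace M] [ContinuousMul M] {s : Set M}
    (hs : IsCompact s) : ∀ n : ℕ, IsCompact (s ^ n)
  | 0 => by simpa only [pow_zero, ← Set.singleton_one] using isCompact_singleton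
  | n + 1 => by rw [pow_succ]; exact (hs.pow n).mul hs

theorem Continuous.integrableOn_isCompact {X E : Type*} [TopologicalSpace X] [R1Space X]
    [MeasurableSpace X] [OpensMeasurableSpace X] [NormedAddCommGroup E] {μ : Measure X}
    [IsFiniteMeasureOnCompacts μ] {f : X → E} (hf : Continuous f) {K : Set X} (hK : IsCompact K) :
    IntegrableOn f K μ :=
  (hf.continuousOn.integrableOn_compact' hK.closure isClosed_closure.measurableSet).mono_set
    subset_closure

section

variable {α : Type*} [MeasurableSpace α] {μ : Measure α}

theorem measure_symmDiff_le_of_restrict_eq {s s' t t' : Set α} (ht : MeasurableSet t)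
    (ht' : MeasurableSet t') (hst : s ⊆ t) (hst' : s' ⊆ t') (h : μ.restrict t = μ.restrict s)
    (h' : μ.restrict t' = μ.restrict s') : μ (t' ∆ t) ≤ μ (s' ∆ s) := by
  have hout : μ (t' \ t) = μ ((s' ∆ s) \ t) := by
    have hset : (s' ∆ s) \ t = tᶜ ∩ s' := by
      ext x; simp only [Set.mem_symmDiff, Set.mem_sdiff, mem_inter_iff, mem_compl_iff]
      have := @hst x; tauto
    rw [hset, ← Measure.restrict_apply ht.compl, ← h', Measure.restrict_apply ht.compl,
      Set.sdiff_eq, inter_comm]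
  have hin : μ (t \ t') ≤ μ ((s' ∆ s) ∩ t) := by
    calc μ (t \ t') = μ (t'ᶜ ∩ s) := by
          rw [← Measure.restrict_apply ht'.compl, ← h, Measure.restrict_apply ht'.compl,
            Set.sdiff_eq, inter_comm]
      _ ≤ μ ((s' ∆ s) ∩ t) := measure_mono fun x ⟨hxt', hxs⟩ =>
          ⟨Or.inr ⟨hxs, fun hxs' => hxt' (hst' hxs')⟩, hst hxs⟩
  calc μ (t' ∆ t) ≤ μ (t' \ t) + μ (t \ t') := measure_union_le _ _
    _ ≤ μ ((s' ∆ s) ∩ t) + μ ((s' ∆ s) \ t) := by rw [hout, add_comm]; gcongr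
    _ = μ (s' ∆ s) := measure_inter_add_sdiff _ ht

variable {E : Type*} [NormedAddCommGroup E] [NormedSpace ℝ E]

theorem norm_setAverage_sub_setAverage_le {f : α → E} {s t : Set α} (hs : MeasurableSet s)
    (ht : MeasurableSet t) (hst : μ s = μ t) (ht_top : μ t ≠ ⊤) (hfs : IntegrableOn f s μ)
    (hft : IntegrableOn f t μ) {M : ℝ} (hM : ∀ᵐ x ∂μ.restrict (s ∆ t), ‖f x‖ ≤ M) :
    ‖⨍ x in s, f x ∂μ - ⨍ x in t, f x ∂μ‖ ≤ M * μ.real (s ∆ t) / μ.real t := by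
  have hs_top : μ s ≠ ⊤ := hst ▸ ht_top
  have hsplit : ∫ x in s, f x ∂μ - ∫ x in t, f x ∂μ
      = ∫ x in s \ t, f x ∂μ - ∫ x in t \ s, f x ∂μ := by
    rw [← integral_inter_add_sdiff ht hfs, ← integral_inter_add_sdiff hs hft, inter_comm]
    abel
  have hM' := (ae_restrict_union_iff _ _ _).1 (by rwa [← Set.symmDiff_def])
  rw [setAverage_eq, setAverage_eq, measureReal_def, hst, ← measureReal_def, ← smul_sub,
    norm_smul, hsplit, norm_inv, Real.norm_of_nonneg measureReal_nonneg,
    measureReal_symmDiff_eq hs ht hs_top ht_top, inv_mul_eq_div, mul_add]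
  gcongr
  refine (norm_sub_le _ _).trans (add_le_add ?_ ?_)
  · exact norm_setIntegral_le_of_norm_le_const_ae
      ((measure_mono sdiff_subset).trans_lt hs_top.lt_top) hM'.1
  · exact norm_setIntegral_le_of_norm_le_const_ae
      ((measure_mono sdiff_subset).trans_lt ht_top.lt_top) hM'.2

end

section

variable {G : Type*} [Group G] [TopologicalSpace G] [IsTopologicalGroup G] [MeasurableSpace G]
  [BorelSpace G] {μ : Measure G} [μ.IsMulLeftInvariant]

theorem map_mul_left_restrict (g : G) (s : Set G) :
    (μ.restrict s).map (g * ·) = μ.restrict (g • s) :=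
  ((measurePreserving_mul_left μ g).restrict_image_emb
    (MeasurableEquiv.mulLeft g).measurableEmbedding s).map_eq

theorem restrict_smul_set_congr {s t : Set G} (h : μ.restrict t = μ.restrict s) (g : G) :
    μ.restrict (g • t) = μ.restrict (g • s) := by
  rw [← map_mul_left_restrict, h, map_mul_left_restrict]

variable {E : Type*} [NormedAddCommGroup E] [NormedSpace ℝ E]

theorem setAverage_smul_set (f : G → E) (g : G) (s : Set G) :
    ⨍ x in g • s, f x ∂μ = ⨍ x in s, f (g * x) ∂μ := by
  rw [setAverage_eq, setAverage_eq, measureReal_def, measure_smul, ← measureReal_def]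
  exact congrArg _ ((measurePreserving_mul_left μ g).setIntegral_image_emb
    (MeasurableEquiv.mulLeft g).measurableEmbedding f s)

theorem map_setAverage_add_of_cocycle [CompleteSpace E] {π : G → E →L[ℝ] E} {b : G → E}
    (hb : ∀ g h, b (g * h) = π g (b h) + b g) {s : Set G} (hs₀ : μ s ≠ 0) (hs : μ s ≠ ⊤)
    (hbs : IntegrableOn b s μ) (g : G) :
    π g (⨍ x in s, b x ∂μ) + b g = ⨍ x in g • s, b x ∂μ := by
  have hpos : μ.real s ≠ 0 := (ENNReal.toReal_pos hs₀ hs).ne'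
  calc π g (⨍ x in s, b x ∂μ) + b g = ⨍ x in s, (π g (b x) + b g) ∂μ := by
        rw [setAverage_eq, setAverage_eq, integral_add ((π g).integrable_comp hbs)
          (integrableOn_const hs), (π g).integral_comp_comm hbs, setIntegral_const, smul_add,
          map_smul, smul_smul, inv_mul_cancel₀ hpos, one_smul]
    _ = ⨍ x in g • s, b x ∂μ := by simp_rw [setAverage_smul_set, hb]

theorem norm_map_setAverage_add_sub_le [IsFiniteMeasureOnCompacts μ] [CompleteSpace E]
    {π : G → E →L[ℝ] E} {b : G → E} (hbc : Continuous b)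
    (hb : ∀ g h, b (g * h) = π g (b h) + b g) {F : Set G} (hF : IsCompact F) (hF₀ : μ F ≠ 0)
    {g : G} {δ M : ℝ} (hδ : 0 ≤ δ) (hFol : μ ((g • F) ∆ F) ≤ ENNReal.ofReal δ * μ F)
    (hM : ∀ x ∈ F ∪ g • F, ‖b x‖ ≤ M) :
    ‖π g (⨍ x in F, b x ∂μ) + b g - ⨍ x in F, b x ∂μ‖ ≤ δ * M := by
  have hF_top : μ F ≠ ⊤ := hF.measure_ne_top
  obtain ⟨x₀, hx₀⟩ := nonempty_of_measure_ne_zero hF₀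
  have hM₀ : 0 ≤ M := (norm_nonneg _).trans (hM x₀ (Or.inl hx₀))
  -- `F` need not be measurable; its measurable hull `T` has the same restricted measure, so
  -- integrals over `F` and bounds on `F` transfer to `T` (the latter almost everywhere).
  set T := toMeasurable μ F
  have hT : MeasurableSet T := measurableSet_toMeasurable μ F
  have hμT : μ T = μ F := measure_toMeasurable F
  have hT_top : μ T ≠ ⊤ := hμT ▸ hF_top
  have hTF : μ.restrict T = μ.restrict F := Measure.restrict_toMeasurable hF_top
  have hgTF : μ.restrict (g • T) = μ.restrict (g • F) := restrict_smul_set_congr hTF g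
  have hbT : IntegrableOn b T μ := by
    rw [IntegrableOn, hTF]; exact hbc.integrableOn_isCompact hF
  have hbgT : IntegrableOn b (g • T) μ := by
    rw [IntegrableOn, hgTF]; exact hbc.integrableOn_isCompact (hF.smul g)
  have hbound : ∀ u ⊆ F ∪ g • F, ∀ᵐ x ∂μ.restrict u, ‖b x‖ ≤ M := fun u hu =>
    (ae_restrict_iff (isClosed_le hbc.norm continuous_const).measurableSet).2
      (Eventually.of_forall fun x hx => hM x (hu hx))
  have hMT : ∀ᵐ x ∂μ.restrict ((g • T) ∆ T), ‖b x‖ ≤ M := by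
    refine ae_restrict_of_ae_restrict_of_subset symmDiff_subset_union
      ((ae_restrict_union_iff _ _ _).2 ⟨?_, ?_⟩)
    · rw [hgTF]; exact hbound _ subset_union_right
    · rw [hTF]; exact hbound _ subset_union_left
  have hΔ : μ.real ((g • T) ∆ T) ≤ δ * μ.real T := by
    have := (measure_symmDiff_le_of_restrict_eq hT (hT.const_smul g) (subset_toMeasurable μ F)
      (smul_set_mono (subset_toMeasurable μ F)) hTF hgTF).trans hFol
    rw [← hμT] at this
    simpa [measureReal_def, ENNReal.toReal_mul, ENNReal.toReal_ofReal hδ] using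
      ENNReal.toReal_mono (ENNReal.mul_ne_top ENNReal.ofReal_ne_top hT_top) this
  rw [map_setAverage_add_of_cocycle hb hF₀ hF_top (hbc.integrableOn_isCompact hF), ← hTF, ← hgTF]
  calc _ ≤ M * μ.real ((g • T) ∆ T) / μ.real T :=
        norm_setAverage_sub_setAverage_le (hT.const_smul g) hT (measure_smul μ g T)
          hT_top hbgT hbT hMT
    _ ≤ M * (δ * μ.real T) / μ.real T := by gcongr
    _ = δ * M := by
        have : μ.real T ≠ 0 := by
          rw [measureReal_def, hμT]; exact (ENNReal.toReal_pos hF₀ hF_top).ne'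
        field_simp

end

theorem exists_norm_le_add_mul_wordLength {G E : Type*} [Group G] [TopologicalSpace G]
    [ContinuousMul G] [NormedAddCommGroup E] {S : Set G} (hS : IsCompact S)
    (hSgen : ∀ g : G, ∃ n : ℕ, g ∈ S ^ n) {b : G → E} (hb : Continuous b) {ε : ℝ} (hε : 0 ≤ ε)
    {N : ℕ} (hN : ∀ g : G, N ≤ wordLength S g → ‖b g‖ ≤ ε * wordLength S g) :
    ∃ M : ℝ, ∀ g : G, ‖b g‖ ≤ M + ε * wordLength S g := by
  obtain ⟨M, hM⟩ := ((Finset.range N).finite_toSet.isCompact_biUnion fun m _ =>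
    hS.pow m).exists_bound_of_continuousOn hb.continuousOn
  refine ⟨max M 0, fun g => ?_⟩
  have : 0 ≤ ε * wordLength S g := by positivity
  rcases le_or_gt N (wordLength S g) with hg | hg
  · linarith [hN g hg, le_max_right M 0]
  · have hgS : g ∈ ⋃ m ∈ Finset.range N, S ^ m :=
      mem_biUnion (Finset.mem_range.2 hg) (Nat.sInf_mem (hSgen g))
    linarith [hM g hgS, le_max_left M 0]

theorem stmt3_general {G : Type*} [Group G] [TopologicalSpace G] [IsTopologicalGroup G]
    [MeasurableSpace G] [BorelSpace G]
    (μ : Measure G) [μ.IsHaarMeasure]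
    (S : Set G) (hScomp : IsCompact S) (hSgen : ∀ g : G, ∃ n : ℕ, g ∈ S ^ n)
    -- Property (CF)
    (F : ℕ → Set G) (C : ℝ)
    (hCF : ∀ n : ℕ, 1 ≤ n → IsCompact (F n) ∧ 0 < μ (F n) ∧ F n ⊆ S ^ n ∧
      ∀ s ∈ S, μ ((s • F n) ∆ F n) ≤ ENNReal.ofReal (C / n) * μ (F n))
    -- a continuous isometric representation on a Banach space `E`
    {E : Type*} [NormedAddCommGroup E] [NormedSpace ℝ E] [CompleteSpace E]
    (π : G →* (E →L[ℝ] E))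
    -- a sublinear 1-cocycle
    (b : G → E) (hbcont : Continuous b)
    (hbcocycle : ∀ g h : G, b (g * h) = π g (b h) + b g)
    (hsublin : ∀ ε : ℝ, 0 < ε → ∃ N : ℕ, ∀ g : G, N ≤ wordLength S g →
      ‖b g‖ ≤ ε * (wordLength S g : ℝ)) :
    ∃ v : ℕ → E, ∀ ε : ℝ, 0 < ε → ∃ N : ℕ, ∀ n : ℕ, N ≤ n →
      ∀ s ∈ S, ‖π s (v n) + b s - v n‖ ≤ ε := by
  refine ⟨fun n => ⨍ x in F n, b x ∂μ, fun ε hε => ?_⟩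
  set C' := max C 0
  set ε' := ε / (2 * (C' + 1))
  have hε' : 0 < ε' := by positivity
  have hCε' : C' * ε' ≤ ε / 2 := by
    rw [mul_div_assoc', div_le_div_iff₀ (by positivity) two_pos]
    nlinarith [le_max_right C 0]
  obtain ⟨N₀, hN₀⟩ := hsublin ε' hε'
  obtain ⟨M, hM⟩ := exists_norm_le_add_mul_wordLength hScomp hSgen hbcont hε'.le hN₀
  have hbound : ∀ m : ℕ, ∀ g ∈ S ^ m, ‖b g‖ ≤ M + ε' * m := fun m g hg =>
    (hM g).trans (by gcongr; exact Nat.sInf_le hg)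
  obtain ⟨N, hN⟩ := (((tendsto_const_div_atTop_nhds_zero_nat (C' * (M + ε'))).eventually
    (gt_mem_nhds (half_pos hε))).and (eventually_ge_atTop 1)).exists_forall_of_atTop
  refine ⟨N, fun n hn s hs => ?_⟩
  obtain ⟨hsmall, hn⟩ := hN n hn
  obtain ⟨hFc, hF₀, hFS, hFol⟩ := hCF n hn
  have hMn : ∀ x ∈ F n ∪ s • F n, ‖b x‖ ≤ M + ε' * (n + 1) := by
    rintro _ (hx | ⟨y, hy, rfl⟩)
    · linarith [hbound n _ (hFS hx), hε'.le]
    · simpa using hbound (n + 1) _ (pow_succ' S n ▸ mul_mem_mul hs (hFS hy))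
  calc _ ≤ C' / n * (M + ε' * (n + 1)) :=
        norm_map_setAverage_add_sub_le hbcont hbcocycle hFc hF₀.ne' (by positivity)
          ((hFol s hs).trans (by gcongr; exact le_max_left C 0)) hMn
    _ = C' * (M + ε') / n + C' * ε' := by field_simp; ring
    _ ≤ ε := by linarith

/-- Let `G` be a locally compact compactly generated group with Property
(CF), `π` a continuous isometric representation of `G` on a Banach space `E`, and
`b ∈ Z¹(G, π)` a sublinear `1`-cocycle (`‖b(g)‖ = o(|g|_S)`).  Then `b` lies in the closure
of the coboundaries: equivalently, the affine action `σ(g)v = π(g)v + b(g)` admits a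
sequence of almost fixed points. -/
theorem stmt3 {G : Type*} [Group G] [TopologicalSpace G] [IsTopologicalGroup G]
    [LocallyCompactSpace G] [MeasurableSpace G] [BorelSpace G]
    (μ : Measure G) [μ.IsMulLeftInvariant] [μ.IsHaarMeasure]
    (S : Set G) (hScomp : IsCompact S) (hSsym : S⁻¹ = S) (hSgen : ∀ g : G, ∃ n : ℕ, g ∈ S ^ n)
    -- Property (CF)
    (F : ℕ → Set G) (C : ℝ)
    (hCF : ∀ n : ℕ, 1 ≤ n → IsCompact (F n) ∧ 0 < μ (F n) ∧ F n ⊆ S ^ n ∧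
      ∀ s ∈ S, μ ((s • F n) ∆ F n) ≤ ENNReal.ofReal (C / n) * μ (F n))
    -- a continuous isometric representation on a Banach space `E`
    {E : Type*} [NormedAddCommGroup E] [NormedSpace ℝ E] [CompleteSpace E]
    (π : G →* (E →L[ℝ] E)) (hπiso : ∀ (g : G) (v : E), ‖π g v‖ = ‖v‖)
    (hπcont : Continuous fun q : G × E => π q.1 q.2)
    -- a sublinear 1-cocycle
    (b : G → E) (hbcont : Continuous b)
    (hbcocycle : ∀ g h : G, b (g * h) = π g (b h) + b g)
    (hsublin : ∀ ε : ℝ, 0 < ε → ∃ N : ℕ, ∀ g : G, N ≤ wordLength S g →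
      ‖b g‖ ≤ ε * (wordLength S g : ℝ)) :
    ∃ v : ℕ → E, ∀ ε : ℝ, 0 < ε → ∃ N : ℕ, ∀ n : ℕ, N ≤ n →
      ∀ s ∈ S, ‖π s (v n) + b s - v n‖ ≤ ε :=
  stmt3_general μ S hScomp hSgen F C hCF π b hbcont hbcocycle hsublin
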